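/- arXiv:1905.01225 — 3 statements merged into one kernel-verified Lean document; each statement's English description precedes it below -/
import Mathlib

section
/- Let $p$ and $q$ be primes with $p \equiv 5 \pmod 8$ and $q \equiv 7 \pmod 8$, and let $\varepsilon_{pq} = a + b\sqrt{pq}$ be the fundamental unit of $\mathbb{Q}(\sqrt{pq})$ (so $a^2 - pq b^2 = 1$). Then neither $a+1$ nor $a-1$ is a perfect square. -/
/-!
From `a² - pq b² = 1` we get `(a - 1)(a + 1) = p q b²`, whose `p`-adic valuation is odd. The
factors differ by `2`, so `p` divides exactly one of them; that factor has odd valuation and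
cannot be a square, while the other one is `≡ ±2 (mod p)`, and neither `2` nor `-2` is a square
modulo a prime `p ≡ 5 (mod 8)`.
-/

namespace Nat

theorem even_factorization_of_isSquare {n : ℕ} (hn : IsSquare n) (p : ℕ) :
    Even (n.factorization p) := by
  obtain ⟨c, rfl⟩ := hn
  rcases eq_or_ne c 0 with rfl | hc
  · simp
  · exact ⟨c.factorization p, by rw [factorization_mul hc hc, Finsupp.add_apply]⟩

theorem not_isSquare_of_odd_factorization_mul {p x y : ℕ} (hxy : Odd ((x * y).factorization p))
    (hpx : ¬ p ∣ x) : ¬ IsSquare y := by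
  intro hy
  have hxy0 : x * y ≠ 0 := by
    rintro h
    simp [h] at hxy
  rw [factorization_mul (left_ne_zero_of_mul hxy0) (right_ne_zero_of_mul hxy0),
    Finsupp.add_apply, factorization_eq_zero_of_not_dvd hpx, zero_add] at hxy
  exact not_even_iff_odd.mpr hxy (even_factorization_of_isSquare hy p)

section FiveModEight

variable {p : ℕ} [Fact p.Prime]

theorem not_isSquare_add_two_of_dvd (hp8 : p % 8 = 5) {x : ℕ} (hx : p ∣ x) :
    ¬ IsSquare (x + 2) := by
  intro hsq
  have h2 : IsSquare (2 : ZMod p) := by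
    simpa [(ZMod.natCast_eq_zero_iff x p).mpr hx] using hsq.map (Nat.castRingHom (ZMod p))
  rw [ZMod.exists_sq_eq_two_iff (by omega)] at h2
  omega

theorem not_isSquare_of_dvd_add_two (hp8 : p % 8 = 5) {x : ℕ} (hx : p ∣ x + 2) :
    ¬ IsSquare x := by
  intro hsq
  have hx' : (x : ZMod p) = -2 := by
    have := (ZMod.natCast_eq_zero_iff (x + 2) p).mpr hx
    push_cast at this
    linear_combination this
  have h2 : IsSquare (-2 : ZMod p) := hx' ▸ hsq.map (Nat.castRingHom (ZMod p))
  rw [ZMod.exists_sq_eq_neg_two_iff (by omega)] at h2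
  omega

theorem not_isSquare_add_one_and_sub_one (hp8 : p % 8 = 5) {a : ℕ}
    (hodd : Odd (((a - 1) * (a + 1)).factorization p)) :
    ¬ IsSquare (a + 1) ∧ ¬ IsSquare (a - 1) := by
  have hp := (Fact.out : p.Prime)
  have hprod : (a - 1) * (a + 1) ≠ 0 := by
    rintro h
    simp [h] at hodd
  have ha : 2 ≤ a := by
    have := left_ne_zero_of_mul hprod
    omega
  have hdvd : p ∣ (a - 1) * (a + 1) :=
    dvd_of_factorization_pos (by rintro h; simp [h] at hodd)
  have hsum : a - 1 + 2 = a + 1 := by omega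
  have not_dvd_both : ¬ (p ∣ a - 1 ∧ p ∣ a + 1) := by
    rintro ⟨h₁, h₂⟩
    have : p ∣ 2 := by rw [← hsum] at h₂; exact (Nat.dvd_add_right h₁).mp h₂
    have := le_of_dvd two_pos this
    omega
  rcases hp.dvd_mul.mp hdvd with h₁ | h₂
  · rw [mul_comm] at hodd
    exact ⟨hsum ▸ not_isSquare_add_two_of_dvd hp8 h₁,
      not_isSquare_of_odd_factorization_mul hodd fun h₂ => not_dvd_both ⟨h₁, h₂⟩⟩
  · exact ⟨not_isSquare_of_odd_factorization_mul hodd fun h₁ => not_dvd_both ⟨h₁, h₂⟩,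
      not_isSquare_of_dvd_add_two hp8 (hsum ▸ h₂)⟩

end FiveModEight

end Nat

theorem stmt_8_general (p q : ℕ) (hp : p.Prime) (hq : q.Prime)
    (hp8 : p % 8 = 5) (hq8 : q % 8 = 7)
    (a b : ℕ) (hb : 0 < b) (hab : a ^ 2 = p * q * b ^ 2 + 1) :
    ¬ IsSquare (a + 1) ∧ ¬ IsSquare (a - 1) := by
  have := Fact.mk hp
  have hprod : (a - 1) * (a + 1) = p * q * b ^ 2 := by
    have h1 : 1 ≤ a := Nat.pos_of_ne_zero (by rintro rfl; simp at hab)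
    have hz : (a : ℤ) ^ 2 = p * q * b ^ 2 + 1 := by exact_mod_cast hab
    zify [h1]
    linear_combination hz
  have hqp : q.factorization p = 0 :=
    Nat.factorization_eq_zero_of_not_dvd fun h => by
      have := (Nat.prime_dvd_prime_iff_eq hp hq).mp h
      omega
  apply Nat.not_isSquare_add_one_and_sub_one hp8
  rw [hprod, Nat.factorization_mul (mul_ne_zero hp.ne_zero hq.ne_zero) (pow_ne_zero 2 hb.ne'),
    Nat.factorization_mul hp.ne_zero hq.ne_zero, Nat.factorization_pow]
  simp [hp.factorization_self, hqp]

/-- Let `p ≡ 5 (mod 8)` and `q ≡ 7 (mod 8)` be primes, and let `ε_pq = a + b√(pq)` be the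
fundamental unit of `ℚ(√(pq))`, with `a² - pq b² = 1`. Then neither `a + 1` nor `a - 1` is a
perfect square. -/
theorem stmt_8 (p q : ℕ) (hp : p.Prime) (hq : q.Prime)
    (hp8 : p % 8 = 5) (hq8 : q % 8 = 7)
    (a b : ℕ) (ha : 0 < a) (hb : 0 < b) (hab : a ^ 2 = p * q * b ^ 2 + 1)
    (hfund : ∀ a' b' : ℕ, 0 < a' → 0 < b' → a' ^ 2 = p * q * b' ^ 2 + 1 → a ≤ a') :
    ¬ IsSquare (a + 1) ∧ ¬ IsSquare (a - 1) :=
  stmt_8_general p q hp hq hp8 hq8 a b hb hab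
end

section
/- Let $p$ and $q$ be primes with $p \equiv 5 \pmod 8$ and $q \equiv 7 \pmod 8$, and suppose $x, y$ are positive integers with $x^2 - 2pq y^2 = 1$. If $x$ is the smallest such positive integer (i.e., $x + y\sqrt{2pq}$ is the fundamental solution), then neither $x+1$ nor $x-1$ is a perfect square. -/
/-!
Write `x² - 1 = (x - 1)(x + 1) = 2pq y²`. If `x ± 1 = s²`, then `s² (x ∓ 1) = p · 2q · y²`.
Comparing `p`-adic valuations (even on the left unless `p ∣ x ∓ 1`, odd on the right)
gives `x ≡ ±1 (mod p)`, hence `s² ≡ ±2 (mod p)`. But `±2` is a non-residue modulo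
`p ≡ 5 (mod 8)`.
-/

theorem Nat.Prime.dvd_of_sq_mul_eq_mul_mul_sq {p a m n b : ℕ} (hp : p.Prime) (hn : ¬ p ∣ n)
    (ha : a ≠ 0) (h : a ^ 2 * m = p * n * b ^ 2) : p ∣ m := by
  by_contra hm
  have : Fact p.Prime := ⟨hp⟩
  have hm0 : m ≠ 0 := fun h0 => hm (h0 ▸ dvd_zero p)
  have hn0 : n ≠ 0 := fun h0 => hn (h0 ▸ dvd_zero p)
  have hb : b ≠ 0 := by rintro rfl; simp [ha, hm0] at h
  have hval := congrArg (padicValNat p) h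
  rw [padicValNat.mul (pow_ne_zero 2 ha) hm0,
    padicValNat.mul (mul_ne_zero hp.ne_zero hn0) (pow_ne_zero 2 hb),
    padicValNat.mul hp.ne_zero hn0, padicValNat.pow a 2, padicValNat.pow b 2,
    padicValNat.eq_zero_of_not_dvd hm, padicValNat.eq_zero_of_not_dvd hn,
    padicValNat.self hp.one_lt] at hval
  omega

theorem Nat.sub_one_mul_add_one_of_sq_eq_mul_sq_add_one {x d y : ℕ} (h : x ^ 2 = d * y ^ 2 + 1) :
    (x - 1) * (x + 1) = d * y ^ 2 := by
  rw [mul_comm, ← Nat.sq_sub_sq, one_pow, h, Nat.add_sub_cancel]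

section PellFactor

variable {p n x y : ℕ} (hp : p.Prime) (hn : ¬ p ∣ n) (hx : 1 ≤ x)
  (hfac : (x - 1) * (x + 1) = p * n * y ^ 2)
include hp hn hx hfac

theorem isSquare_two_zmod_of_isSquare_add_one (hs : IsSquare (x + 1)) :
    IsSquare (2 : ZMod p) := by
  obtain ⟨s, hs⟩ := hs
  have hs0 : s ≠ 0 := by rintro rfl; simp at hs
  have hdvd : p ∣ x - 1 :=
    hp.dvd_of_sq_mul_eq_mul_mul_sq hn hs0 (by rw [← hfac, sq, ← hs, mul_comm])
  have hx1 : (x : ZMod p) = 1 := by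
    have := (ZMod.natCast_eq_zero_iff _ _).mpr hdvd
    push_cast [hx] at this
    linear_combination this
  refine ⟨s, ?_⟩
  have := congrArg (Nat.cast : ℕ → ZMod p) hs
  push_cast at this
  linear_combination this - hx1

theorem isSquare_neg_two_zmod_of_isSquare_sub_one (hx1 : x ≠ 1) (hs : IsSquare (x - 1)) :
    IsSquare (-2 : ZMod p) := by
  obtain ⟨s, hs⟩ := hs
  have hs0 : s ≠ 0 := by rintro rfl; omega
  have hdvd : p ∣ x + 1 := hp.dvd_of_sq_mul_eq_mul_mul_sq hn hs0 (by rw [← hfac, sq, ← hs])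
  have hx1 : (x : ZMod p) = -1 := by
    have := (ZMod.natCast_eq_zero_iff _ _).mpr hdvd
    push_cast at this
    linear_combination this
  refine ⟨s, ?_⟩
  have := congrArg (Nat.cast : ℕ → ZMod p) hs
  push_cast [hx] at this
  linear_combination this - hx1

end PellFactor

theorem stmt_9_general (p q : ℕ) (hp : p.Prime) (hq : q.Prime)
    (hp8 : p % 8 = 5) (hq8 : q % 8 = 7)
    (x y : ℕ) (hy : 0 < y) (hxy : x ^ 2 = 2 * p * q * y ^ 2 + 1) :
    ¬ IsSquare (x + 1) ∧ ¬ IsSquare (x - 1) := by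
  have : Fact p.Prime := ⟨hp⟩
  have hp2 : p ≠ 2 := by omega
  have hpq : ¬ p ∣ 2 * q := by
    rw [hp.dvd_mul, Nat.prime_dvd_prime_iff_eq hp Nat.prime_two,
      Nat.prime_dvd_prime_iff_eq hp hq]
    omega
  have hpos : 0 < 2 * p * q * y ^ 2 := by have := hp.pos; have := hq.pos; positivity
  have hx : 1 ≤ x := by nlinarith
  have hx1 : x ≠ 1 := by rintro rfl; omega
  have hfac : (x - 1) * (x + 1) = p * (2 * q) * y ^ 2 := by
    rw [Nat.sub_one_mul_add_one_of_sq_eq_mul_sq_add_one hxy]; ring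
  constructor
  · intro hs
    have := (ZMod.exists_sq_eq_two_iff hp2).mp
      (isSquare_two_zmod_of_isSquare_add_one hp hpq hx hfac hs)
    omega
  · intro hs
    have := (ZMod.exists_sq_eq_neg_two_iff hp2).mp
      (isSquare_neg_two_zmod_of_isSquare_sub_one hp hpq hx hfac hx1 hs)
    omega

/-- Let `p ≡ 5 (mod 8)` and `q ≡ 7 (mod 8)` be primes, and let `x, y` be positive integers
with `x² - 2pq y² = 1`, with `x` smallest possible (fundamental solution of the Pell
equation, giving the fundamental unit `ε_{2pq} = x + y√(2pq)`). Then neither `x + 1` nor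
`x - 1` is a perfect square. -/
theorem stmt_9 (p q : ℕ) (hp : p.Prime) (hq : q.Prime)
    (hp8 : p % 8 = 5) (hq8 : q % 8 = 7)
    (x y : ℕ) (hx : 0 < x) (hy : 0 < y) (hxy : x ^ 2 = 2 * p * q * y ^ 2 + 1)
    (hfund : ∀ x' y' : ℕ, 0 < x' → 0 < y' → x' ^ 2 = 2 * p * q * y' ^ 2 + 1 → x ≤ x') :
    ¬ IsSquare (x + 1) ∧ ¬ IsSquare (x - 1) :=
  stmt_9_general p q hp hq hp8 hq8 x y hy hxy
end

section
/- Let $q_1, q_2$ be primes with $q_1 \equiv 3 \pmod 8$ and $q_2 \equiv 7 \pmod 8$, and let $a, b$ be positive integers with $a^2 - q_1 q_2 b^2 = 1$ giving the fundamental unit $a + b\sqrt{q_1 q_2}$ of $\mathbb{Q}(\sqrt{q_1 q_2})$. Then neither $a+1$ nor $a-1$ is a perfect square. -/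
/-!
Write `a² - 1 = (a + 1)(a - 1) = q₁q₂b²`. If `a + 1 = c²`, then `c²(a - 1) = q₁q₂b²`, and comparing
`q₁`-adic valuations gives `q₁ ∣ a - 1`, so `c² ≡ 2 (mod q₁)`; this is impossible since `2` is a
non-residue modulo `q₁ ≡ 3 (mod 8)`. Symmetrically, if `a - 1 = c²` then `q₂ ∣ a + 1`, so
`c² ≡ -2 (mod q₂)`, impossible since `-2` is a non-residue modulo `q₂ ≡ 7 (mod 8)`.
-/

/-- The `p`-adic valuation of the right-hand side is odd. -/
lemma Nat.Prime.dvd_of_sq_mul_eq {p m x y b : ℕ} (hp : p.Prime) (hpm : ¬ p ∣ m) (hb : b ≠ 0)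
    (h : x ^ 2 * y = p * m * b ^ 2) : p ∣ y := by
  have hm : m ≠ 0 := by rintro rfl; exact hpm (dvd_zero p)
  have hrhs : p * m * b ^ 2 ≠ 0 := by have := hp.ne_zero; positivity
  have hx : x ≠ 0 := by rintro rfl; simp [← h] at hrhs
  have hy : y ≠ 0 := by rintro rfl; simp [← h] at hrhs
  have hval := congrArg (fun n => n.factorization p) h
  simp only [Nat.factorization_mul (pow_ne_zero 2 hx) hy,
    Nat.factorization_mul (mul_ne_zero hp.ne_zero hm) (pow_ne_zero 2 hb),
    Nat.factorization_mul hp.ne_zero hm, Nat.factorization_pow, Finsupp.add_apply,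
    Finsupp.smul_apply, smul_eq_mul, hp.factorization_self,
    Nat.factorization_eq_zero_of_not_dvd hpm] at hval
  exact Nat.dvd_of_factorization_pos (by omega)

lemma Nat.add_one_mul_sub_one_of_sq_eq {a n : ℕ} (h : a ^ 2 = n + 1) : (a + 1) * (a - 1) = n := by
  rw [← Nat.sq_sub_sq, h]
  simp

lemma not_isSquare_add_one_of_sq_eq {p m a b : ℕ} (hp : p.Prime) (hp8 : p % 8 = 3 ∨ p % 8 = 5)
    (hpm : ¬ p ∣ m) (hb : b ≠ 0) (h : a ^ 2 = p * m * b ^ 2 + 1) : ¬ IsSquare (a + 1) := by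
  have := Fact.mk hp
  rintro ⟨c, hc⟩
  have ha : 1 ≤ a := Nat.pos_of_ne_zero (by rintro rfl; simp at h)
  have hdvd : p ∣ a - 1 :=
    hp.dvd_of_sq_mul_eq (x := c) hpm hb (by rw [← Nat.add_one_mul_sub_one_of_sq_eq h, hc]; ring)
  have ha_mod : (a : ZMod p) = 1 := by
    have := (ZMod.natCast_eq_zero_iff _ _).mpr hdvd
    rw [Nat.cast_sub ha, Nat.cast_one, sub_eq_zero] at this
    exact this
  have hc_mod : (c : ZMod p) * c = 2 := by
    rw [← Nat.cast_mul, ← hc, Nat.cast_add, ha_mod]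
    norm_num
  have := (ZMod.exists_sq_eq_two_iff (p := p) (by omega)).mp ⟨c, hc_mod.symm⟩
  omega

lemma not_isSquare_sub_one_of_sq_eq {p m a b : ℕ} (hp : p.Prime) (hp8 : p % 8 = 5 ∨ p % 8 = 7)
    (hpm : ¬ p ∣ m) (hb : b ≠ 0) (h : a ^ 2 = p * m * b ^ 2 + 1) : ¬ IsSquare (a - 1) := by
  have := Fact.mk hp
  rintro ⟨c, hc⟩
  have ha : 1 ≤ a := Nat.pos_of_ne_zero (by rintro rfl; simp at h)
  have hdvd : p ∣ a + 1 :=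
    hp.dvd_of_sq_mul_eq (x := c) hpm hb (by rw [← Nat.add_one_mul_sub_one_of_sq_eq h, hc]; ring)
  have ha_mod : (a : ZMod p) = -1 := by
    have := (ZMod.natCast_eq_zero_iff _ _).mpr hdvd
    rw [Nat.cast_add, Nat.cast_one, add_eq_zero_iff_eq_neg] at this
    exact this
  have hc_mod : (c : ZMod p) * c = -2 := by
    rw [← Nat.cast_mul, ← hc, Nat.cast_sub ha, ha_mod]
    norm_num
  have := (ZMod.exists_sq_eq_neg_two_iff (p := p) (by omega)).mp ⟨c, hc_mod.symm⟩
  omega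

theorem stmt_10_general (q₁ q₂ : ℕ) (hq₁ : q₁.Prime) (hq₂ : q₂.Prime)
    (hq₁8 : q₁ % 8 = 3) (hq₂8 : q₂ % 8 = 7)
    (a b : ℕ) (hb : 0 < b) (hab : a ^ 2 = q₁ * q₂ * b ^ 2 + 1) :
    ¬ IsSquare (a + 1) ∧ ¬ IsSquare (a - 1) := by
  have hne : q₁ ≠ q₂ := by omega
  refine ⟨not_isSquare_add_one_of_sq_eq hq₁ (.inl hq₁8)
      (fun h => hne ((Nat.prime_dvd_prime_iff_eq hq₁ hq₂).mp h)) hb.ne' hab,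
    not_isSquare_sub_one_of_sq_eq hq₂ (.inr hq₂8)
      (fun h => hne ((Nat.prime_dvd_prime_iff_eq hq₂ hq₁).mp h).symm) hb.ne' ?_⟩
  rw [hab, mul_comm q₂]

/-- Let `q₁ ≡ 3 (mod 8)` and `q₂ ≡ 7 (mod 8)` be primes, and let `a + b√(q₁q₂)` be the
fundamental unit of `ℚ(√(q₁q₂))`, with `a, b` positive integers and `a² - q₁q₂ b² = 1`.
Then neither `a + 1` nor `a - 1` is a perfect square. -/
theorem stmt_10 (q₁ q₂ : ℕ) (hq₁ : q₁.Prime) (hq₂ : q₂.Prime)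
    (hq₁8 : q₁ % 8 = 3) (hq₂8 : q₂ % 8 = 7)
    (a b : ℕ) (ha : 0 < a) (hb : 0 < b) (hab : a ^ 2 = q₁ * q₂ * b ^ 2 + 1)
    (hfund : ∀ a' b' : ℕ, 0 < a' → 0 < b' → a' ^ 2 = q₁ * q₂ * b' ^ 2 + 1 → a ≤ a') :
    ¬ IsSquare (a + 1) ∧ ¬ IsSquare (a - 1) :=
  stmt_10_general q₁ q₂ hq₁ hq₂ hq₁8 hq₂8 a b hb hab
end
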